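/- Let d ≥ 1, let A ⊆ ℤ^d, and let u ∈ ℤ^d be nonzero. Set A_1 = {a + k·u : a ∈ A, k ∈ ℕ} and A_2 = {a − k·u : a ∈ A, k ∈ ℕ}, and assume A_1 ∩ A_2 = A. Suppose D, D_1, D_2 ∈ ℚ[ℤ^d] are nonzero and the convolutions P := D ⋆ 1_A, P_1 := D_1 ⋆ 1_{A_1}, P_2 := D_2 ⋆ 1_{A_2} are all finitely supported. Then P_1/D_1 + P_2/D_2 = P/D in the fraction field of ℚ[ℤ^d]; that is, S(1_{A_1}) + S(1_{A_2}) = S(1_A). (This is the two-cone case at the heart of the proof of the paper's Lemma 9.6.) -/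

import Mathlib

/-!
Since `A₁ ∩ A₂ = A`, we have `1_{A₁} + 1_{A₂} = 1_A + 1_B` with `B = A₁ ∪ A₂ = A + ℤu`.
The set `B` is invariant under translation by `u`, so `1 - e^u` annihilates `1_B`. Multiplying
by `(1 - e^u) D D₁ D₂` turns all three sums into convolutions with the same element, and the
indicator identity becomes `(1 - e^u)(D D₂ P₁ + D D₁ P₂) = (1 - e^u) D₁ D₂ P`;
cancelling `1 - e^u ≠ 0` in the domain `ℚ[ℤ^d]` gives the claim.
-/

/-- The convolution `D ⋆ f`. -/
noncomputable def conv {d : ℕ} (D : AddMonoidAlgebra ℚ (Fin d → ℤ)) (f : (Fin d → ℤ) → ℚ) :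
    (Fin d → ℤ) → ℚ :=
  fun x => ∑ m ∈ D.coeff.support, D.coeff m * f (x - m)

section Convolution

variable {d : ℕ}

lemma conv_eq_finsuppSum (D : AddMonoidAlgebra ℚ (Fin d → ℤ)) (f : (Fin d → ℤ) → ℚ)
    (x : Fin d → ℤ) : conv D f x = D.coeff.sum fun m c => c * f (x - m) := rfl

lemma coeff_mul_eq_conv (E Q : AddMonoidAlgebra ℚ (Fin d → ℤ)) :
    (E * Q).coeff = conv E Q.coeff := by
  funext x
  rw [AddMonoidAlgebra.coeff_mul_apply_left, conv_eq_finsuppSum]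
  simp only [neg_add_eq_sub]

lemma conv_mul (E F : AddMonoidAlgebra ℚ (Fin d → ℤ)) (f : (Fin d → ℤ) → ℚ) :
    conv (E * F) f = conv E (conv F f) := by
  funext x
  simp only [conv_eq_finsuppSum, AddMonoidAlgebra.mul_def, AddMonoidAlgebra.coeff_finsuppSum,
    AddMonoidAlgebra.coeff_single, Finsupp.mul_sum]
  rw [Finsupp.sum_sum_index (by simp) (by simp [add_mul])]
  refine Finsupp.sum_congr fun a _ => ?_
  rw [Finsupp.sum_sum_index (by simp) (by simp [add_mul])]
  refine Finsupp.sum_congr fun b _ => ?_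
  rw [Finsupp.sum_single_index (by simp), sub_sub, mul_assoc]

lemma conv_add (D : AddMonoidAlgebra ℚ (Fin d → ℤ)) (f g : (Fin d → ℤ) → ℚ) :
    conv D (f + g) = conv D f + conv D g := by
  funext x
  simp only [conv, Pi.add_apply, mul_add, Finset.sum_add_distrib]

lemma conv_zero (D : AddMonoidAlgebra ℚ (Fin d → ℤ)) : conv D 0 = 0 := by
  funext x
  simp [conv]

lemma conv_one_sub_single (u : Fin d → ℤ) (f : (Fin d → ℤ) → ℚ) (x : Fin d → ℤ) :
    conv (1 - AddMonoidAlgebra.single u 1) f x = f x - f (x - u) := by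
  rw [conv_eq_finsuppSum, AddMonoidAlgebra.coeff_sub, Finsupp.sum_sub_index (by simp [sub_mul]),
    AddMonoidAlgebra.one_def, AddMonoidAlgebra.coeff_single, AddMonoidAlgebra.coeff_single,
    Finsupp.sum_single_index (by simp), Finsupp.sum_single_index (by simp)]
  simp

lemma conv_one_sub_single_eq_zero {u : Fin d → ℤ} {f : (Fin d → ℤ) → ℚ}
    (hf : ∀ x, f (x - u) = f x) : conv (1 - AddMonoidAlgebra.single u 1) f = 0 := by
  funext x
  rw [conv_one_sub_single, hf, sub_self, Pi.zero_apply]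

lemma one_sub_single_ne_zero {u : Fin d → ℤ} (hu : u ≠ 0) :
    (1 - AddMonoidAlgebra.single u 1 : AddMonoidAlgebra ℚ (Fin d → ℤ)) ≠ 0 := by
  rw [sub_ne_zero, AddMonoidAlgebra.one_def, Ne, AddMonoidAlgebra.single_inj]
  simp [hu.symm]

end Convolution

section Cones

variable {G : Type*} [AddCommGroup G]

lemma union_cones_eq (A : Set G) (u : G) :
    {x | ∃ a ∈ A, ∃ k : ℕ, x = a + (k : ℤ) • u} ∪ {x | ∃ a ∈ A, ∃ k : ℕ, x = a - (k : ℤ) • u} =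
      {x | ∃ a ∈ A, ∃ k : ℤ, x = a + k • u} := by
  ext x
  constructor
  · rintro (⟨a, ha, k, rfl⟩ | ⟨a, ha, k, rfl⟩)
    · exact ⟨a, ha, k, rfl⟩
    · exact ⟨a, ha, -k, by rw [neg_smul, sub_eq_add_neg]⟩
  · rintro ⟨a, ha, k, rfl⟩
    obtain ⟨n, rfl | rfl⟩ := Int.eq_nat_or_neg k
    · exact Or.inl ⟨a, ha, n, rfl⟩
    · exact Or.inr ⟨a, ha, n, by rw [neg_smul, sub_eq_add_neg]⟩

lemma sub_mem_setOf_add_zsmul_iff (A : Set G) (u x : G) :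
    x - u ∈ {x | ∃ a ∈ A, ∃ k : ℤ, x = a + k • u} ↔ x ∈ {x | ∃ a ∈ A, ∃ k : ℤ, x = a + k • u} := by
  constructor
  · rintro ⟨a, ha, k, hk⟩
    exact ⟨a, ha, k + 1, by rw [add_smul, one_smul, ← add_assoc, ← hk, sub_add_cancel]⟩
  · rintro ⟨a, ha, k, rfl⟩
    exact ⟨a, ha, k - 1, by rw [sub_smul, one_smul, add_sub_assoc]⟩

end Cones

/-- Additivity of the sum `S` modulo `u`-periodic functions, in cross-multiplied form. -/
lemma mul_add_mul_eq_of_add_eq_add_periodic {d : ℕ} {u : Fin d → ℤ} (hu : u ≠ 0)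
    {f f₁ f₂ g : (Fin d → ℤ) → ℚ} (hg : ∀ x, g (x - u) = g x) (hf : f₁ + f₂ = f + g)
    {D D₁ D₂ P P₁ P₂ : AddMonoidAlgebra ℚ (Fin d → ℤ)}
    (hP : ∀ x, P.coeff x = conv D f x) (hP₁ : ∀ x, P₁.coeff x = conv D₁ f₁ x)
    (hP₂ : ∀ x, P₂.coeff x = conv D₂ f₂ x) :
    D * D₂ * P₁ + D * D₁ * P₂ = D₁ * D₂ * P := by
  set v : AddMonoidAlgebra ℚ (Fin d → ℤ) := 1 - AddMonoidAlgebra.single u 1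
  set M := D * D₁ * D₂ * v
  have coeff_eq {E F Q : AddMonoidAlgebra ℚ (Fin d → ℤ)} {h : (Fin d → ℤ) → ℚ}
      (hQ : ∀ x, Q.coeff x = conv F h x) (hEF : E * F = M) : (E * Q).coeff = conv M h := by
    rw [coeff_mul_eq_conv, funext hQ, ← conv_mul, hEF]
  have hMg : conv M g = 0 := by
    rw [conv_mul, conv_one_sub_single_eq_zero hg, conv_zero]
  have key : v * D * D₂ * P₁ + v * D * D₁ * P₂ = v * D₁ * D₂ * P := by
    ext x
    rw [AddMonoidAlgebra.coeff_add, Finsupp.add_apply, coeff_eq (E := v * D * D₂) hP₁ (by ring),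
      coeff_eq (E := v * D * D₁) hP₂ (by ring), coeff_eq (E := v * D₁ * D₂) hP (by ring),
      ← Pi.add_apply, ← conv_add, hf, conv_add, hMg, add_zero]
  apply mul_left_cancel₀ (one_sub_single_ne_zero hu)
  linear_combination key

lemma div_add_div_eq_div_of_mul_add_mul_eq {R K : Type*} [CommRing R] [IsDomain R] [Field K]
    [Algebra R K] [IsFractionRing R K] {a a₁ a₂ b b₁ b₂ : R} (hb : b ≠ 0) (hb₁ : b₁ ≠ 0)
    (hb₂ : b₂ ≠ 0) (h : b * b₂ * a₁ + b * b₁ * a₂ = b₁ * b₂ * a) :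
    algebraMap R K a₁ / algebraMap R K b₁ + algebraMap R K a₂ / algebraMap R K b₂ =
      algebraMap R K a / algebraMap R K b := by
  have hinj := IsFractionRing.injective R K
  have hb' := (map_ne_zero_iff _ hinj).mpr hb
  have hb₁' := (map_ne_zero_iff _ hinj).mpr hb₁
  have hb₂' := (map_ne_zero_iff _ hinj).mpr hb₂
  rw [div_add_div _ _ hb₁' hb₂', div_eq_div_iff (mul_ne_zero hb₁' hb₂') hb']
  have hK := congrArg (algebraMap R K) h
  simp only [map_add, map_mul] at hK
  linear_combination hK

theorem sum_two_cone_subdivision_general {d : ℕ} (A A₁ A₂ : Set (Fin d → ℤ))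
    (u : Fin d → ℤ) (hu : u ≠ 0)
    (hA₁ : A₁ = {x : Fin d → ℤ | ∃ a ∈ A, ∃ k : ℕ, x = a + (k : ℤ) • u})
    (hA₂ : A₂ = {x : Fin d → ℤ | ∃ a ∈ A, ∃ k : ℕ, x = a - (k : ℤ) • u})
    (hA : A₁ ∩ A₂ = A)
    (D D₁ D₂ P P₁ P₂ : AddMonoidAlgebra ℚ (Fin d → ℤ))
    (hD : D ≠ 0) (hD₁ : D₁ ≠ 0) (hD₂ : D₂ ≠ 0)
    (hP : ∀ x, P.coeff x = conv D (Set.indicator A 1) x)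
    (hP₁ : ∀ x, P₁.coeff x = conv D₁ (Set.indicator A₁ 1) x)
    (hP₂ : ∀ x, P₂.coeff x = conv D₂ (Set.indicator A₂ 1) x) :
    (algebraMap (AddMonoidAlgebra ℚ (Fin d → ℤ))
          (FractionRing (AddMonoidAlgebra ℚ (Fin d → ℤ))) P₁) /
        (algebraMap (AddMonoidAlgebra ℚ (Fin d → ℤ))
          (FractionRing (AddMonoidAlgebra ℚ (Fin d → ℤ))) D₁) +
      (algebraMap (AddMonoidAlgebra ℚ (Fin d → ℤ))
          (FractionRing (AddMonoidAlgebra ℚ (Fin d → ℤ))) P₂) /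
        (algebraMap (AddMonoidAlgebra ℚ (Fin d → ℤ))
          (FractionRing (AddMonoidAlgebra ℚ (Fin d → ℤ))) D₂) =
      (algebraMap (AddMonoidAlgebra ℚ (Fin d → ℤ))
          (FractionRing (AddMonoidAlgebra ℚ (Fin d → ℤ))) P) /
        (algebraMap (AddMonoidAlgebra ℚ (Fin d → ℤ))
          (FractionRing (AddMonoidAlgebra ℚ (Fin d → ℤ))) D) := by
  have hunion : A₁ ∪ A₂ = {x | ∃ a ∈ A, ∃ k : ℤ, x = a + k • u} := by
    rw [hA₁, hA₂, union_cones_eq]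
  have hperiodic : ∀ x, (A₁ ∪ A₂).indicator (1 : (Fin d → ℤ) → ℚ) (x - u) =
      (A₁ ∪ A₂).indicator 1 x := by
    classical
    intro x
    simp only [hunion, Set.indicator_apply, sub_mem_setOf_add_zsmul_iff, Pi.one_apply]
  have hindicator : A₁.indicator (1 : (Fin d → ℤ) → ℚ) + A₂.indicator 1 =
      A.indicator 1 + (A₁ ∪ A₂).indicator 1 := by
    funext x
    rw [Pi.add_apply, Pi.add_apply, ← hA, add_comm ((A₁ ∩ A₂).indicator _ _),
      Set.indicator_union_add_inter_apply]
  exact div_add_div_eq_div_of_mul_add_mul_eq hD hD₁ hD₂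
    (mul_add_mul_eq_of_add_eq_add_periodic hu hperiodic hindicator hP hP₁ hP₂)

/-- The two-cone case of Lemma 9.6: given `A ⊆ ℤ^d` and a nonzero `u ∈ ℤ^d`, with
`A_1 = A + ℕ·u`, `A_2 = A - ℕ·u` and `A_1 ∩ A_2 = A`, the Brion–Vergne sums satisfy
`S(1_{A_1}) + S(1_{A_2}) = S(1_A)` in the fraction field of `ℚ[ℤ^d]`. -/
theorem sum_two_cone_subdivision {d : ℕ} (hd : 1 ≤ d) (A A₁ A₂ : Set (Fin d → ℤ))
    (u : Fin d → ℤ) (hu : u ≠ 0)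
    (hA₁ : A₁ = {x : Fin d → ℤ | ∃ a ∈ A, ∃ k : ℕ, x = a + (k : ℤ) • u})
    (hA₂ : A₂ = {x : Fin d → ℤ | ∃ a ∈ A, ∃ k : ℕ, x = a - (k : ℤ) • u})
    (hA : A₁ ∩ A₂ = A)
    (D D₁ D₂ P P₁ P₂ : AddMonoidAlgebra ℚ (Fin d → ℤ))
    (hD : D ≠ 0) (hD₁ : D₁ ≠ 0) (hD₂ : D₂ ≠ 0)
    (hP : ∀ x, P.coeff x = conv D (Set.indicator A 1) x)
    (hP₁ : ∀ x, P₁.coeff x = conv D₁ (Set.indicator A₁ 1) x)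
    (hP₂ : ∀ x, P₂.coeff x = conv D₂ (Set.indicator A₂ 1) x) :
    (algebraMap (AddMonoidAlgebra ℚ (Fin d → ℤ))
          (FractionRing (AddMonoidAlgebra ℚ (Fin d → ℤ))) P₁) /
        (algebraMap (AddMonoidAlgebra ℚ (Fin d → ℤ))
          (FractionRing (AddMonoidAlgebra ℚ (Fin d → ℤ))) D₁) +
      (algebraMap (AddMonoidAlgebra ℚ (Fin d → ℤ))
          (FractionRing (AddMonoidAlgebra ℚ (Fin d → ℤ))) P₂) /
        (algebraMap (AddMonoidAlgebra ℚ (Fin d → ℤ))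
          (FractionRing (AddMonoidAlgebra ℚ (Fin d → ℤ))) D₂) =
      (algebraMap (AddMonoidAlgebra ℚ (Fin d → ℤ))
          (FractionRing (AddMonoidAlgebra ℚ (Fin d → ℤ))) P) /
        (algebraMap (AddMonoidAlgebra ℚ (Fin d → ℤ))
          (FractionRing (AddMonoidAlgebra ℚ (Fin d → ℤ))) D) :=
  sum_two_cone_subdivision_general A A₁ A₂ u hu hA₁ hA₂ hA D D₁ D₂ P P₁ P₂ hD hD₁ hD₂ hP hP₁ hP₂
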